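/- arXiv:1704.01295 — 6 statements merged into one kernel-verified Lean document; each statement's English description precedes it below -/
import Mathlib

section
/- For positive integers m and n, the multiple sum over weakly increasing sequences 1 ≤ k₁ ≤ k₂ ≤ ⋯ ≤ kₘ ≤ n of the product ∏_{i=0}^{m} k_i (n+m-i)^{k_{i+1}-k_i} (with the conventions k₀ = 1 and k_{m+1} = n) equals C(n+m-1, m) · n^{n+m-1}. -/
/-!
Fix the endpoint `n` and let `S_r(a)` be the sum over monotone paths
`a = k₀ ≤ k₁ ≤ ⋯ ≤ k_{r+1} = n` of `∏ kᵢ (n + r - i) ^ (k_{i+1} - kᵢ)`. Splitting off the first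
step gives `S_{r+1}(a) = ∑_{b=a}^{n} a (n + r + 1) ^ (b - a) S_r(b)`, and induction on `r` yields
`S_r(a) = a * C(n - a + r, r) * n ^ (n - a + r)`. After the substitution `b = n - j` the inductive
step is a polynomial identity in `n`, proved by induction on `n - a` from Pascal's rule and
`(r + 1) C(d + r + 1, r + 1) = (d + 1) C(d + r + 1, r)`. The theorem is the case `a = 1`.
-/

open Finset

theorem sum_range_pow_mul_sub_mul_choose {R : Type*} [CommRing R] (x : R) (r d : ℕ) :
    ∑ j ∈ range (d + 1), (x + r + 1) ^ (d - j) * ((x - j) * ((j + r).choose r * x ^ (j + r)))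
      = (d + r + 1).choose (r + 1) * x ^ (d + r + 1) := by
  induction d with
  | zero =>
    simp only [zero_add, range_one, sum_singleton, Nat.sub_self, pow_zero, one_mul, Nat.cast_zero,
      sub_zero, Nat.choose_self, Nat.cast_one]
    ring
  | succ d ih =>
    have hshift : ∀ j ∈ range (d + 1), (x + r + 1) ^ (d + 1 - j) =
        (x + r + 1) * (x + r + 1) ^ (d - j) := fun j hj ↦ by
      rw [Nat.sub_add_comm (Nat.lt_succ_iff.mp (mem_range.mp hj)), pow_succ']
    have hpascal := Nat.choose_succ_succ (d + r + 1) r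
    have habsorb : ((d + r + 1).choose (r + 1) : R) * (r + 1) = (d + r + 1).choose r * (d + 1) := by
      have h := Nat.choose_succ_right_eq (d + r + 1) r
      rw [show d + r + 1 - r = d + 1 by omega] at h
      exact_mod_cast congrArg (Nat.cast (R := R)) h
    rw [sum_range_succ, sum_congr rfl fun j hj ↦ by rw [hshift j hj, mul_assoc], ← mul_sum, ih,
      Nat.sub_self, show d + 1 + r = d + r + 1 by omega]
    push_cast [hpascal, show d + 1 + r + 1 = d + r + 1 + 1 by omega]
    linear_combination x ^ (d + r + 1) * habsorb

theorem sum_Icc_pow_mul_choose {a n : ℕ} (r : ℕ) (ha : a ≤ n) :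
    ∑ b ∈ Icc a n, (n + r + 1) ^ (b - a) * (b * ((n - b + r).choose r * n ^ (n - b + r)))
      = (n - a + r + 1).choose (r + 1) * n ^ (n - a + r + 1) := by
  obtain ⟨d, hd, rfl⟩ : ∃ d ≤ n, a = n - d := ⟨n - a, by omega, by omega⟩
  have hreflect := sum_Ico_reflect
    (fun b ↦ (n + r + 1) ^ (b - (n - d)) * (b * ((n - b + r).choose r * n ^ (n - b + r)))) 0
    (show d + 1 ≤ n + 1 by omega)
  rw [show n + 1 - (d + 1) = n - d by omega, Nat.sub_zero, ← range_eq_Ico] at hreflect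
  rw [← Ico_add_one_right_eq_Icc, ← hreflect, Nat.sub_sub_self hd]
  apply Nat.cast_injective (R := ℤ)
  push_cast
  rw [← sum_range_pow_mul_sub_mul_choose]
  refine sum_congr rfl fun j hj ↦ ?_
  have hj : j ≤ d := Nat.lt_succ_iff.mp (mem_range.mp hj)
  rw [Nat.sub_sub_self (hj.trans hd), show n - j - (n - d) = d - j by omega,
    Nat.cast_sub (hj.trans hd)]

open Classical in
def monotonePaths (n r a : ℕ) : Finset (Fin (r + 2) → Fin (n + 1)) :=
  univ.filter fun K ↦ (K 0 : ℕ) = a ∧ (K (Fin.last (r + 1)) : ℕ) = n ∧ Monotone K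

def pathWeight (n r : ℕ) (K : Fin (r + 2) → Fin (n + 1)) : ℕ :=
  ∏ i : Fin (r + 1), (K i.castSucc : ℕ) * (n + r - (i : ℕ)) ^ ((K i.succ : ℕ) - (K i.castSucc : ℕ))

theorem mem_monotonePaths_succ {n r a : ℕ} {K : Fin (r + 3) → Fin (n + 1)} :
    K ∈ monotonePaths n (r + 1) a ↔
      (K 0 : ℕ) = a ∧ K 0 ≤ K 1 ∧ Fin.tail K ∈ monotonePaths n r (K 1) := by
  have hmono : Monotone K ↔ K 0 ≤ K 1 ∧ Monotone (Fin.tail K) := by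
    conv_lhs => rw [← Fin.cons_self_tail K]
    exact monotone_vecCons
  simp only [monotonePaths, mem_filter, mem_univ, true_and, hmono]
  exact ⟨fun ⟨h0, hl, h01, ht⟩ ↦ ⟨h0, h01, rfl, hl, ht⟩,
    fun ⟨h0, h01, _, hl, ht⟩ ↦ ⟨h0, hl, h01, ht⟩⟩

theorem pathWeight_succ (n r : ℕ) (K : Fin (r + 3) → Fin (n + 1)) :
    pathWeight n (r + 1) K =
      K 0 * (n + r + 1) ^ ((K 1 : ℕ) - K 0) * pathWeight n r (Fin.tail K) := by
  rw [pathWeight, Fin.prod_univ_succ, pathWeight]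
  congr 1
  refine prod_congr rfl fun i _ ↦ ?_
  rw [Fin.val_succ, show n + (r + 1) - (i + 1) = n + r - i by omega, ← Fin.succ_castSucc]
  rfl

theorem sum_pathWeight_zero {n a : ℕ} (ha : a ≤ n) :
    ∑ K ∈ monotonePaths n 0 a, pathWeight n 0 K = a * n ^ (n - a) := by
  have hpaths : monotonePaths n 0 a = {![⟨a, Nat.lt_succ_of_le ha⟩, Fin.last n]} := by
    ext K
    simp only [monotonePaths, mem_filter, mem_univ, true_and, mem_singleton]
    constructor
    · rintro ⟨h0, hlast, -⟩
      ext i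
      fin_cases i
      exacts [h0, hlast]
    · rintro rfl
      exact ⟨rfl, rfl, monotone_vecEmpty.vecCons (Fin.le_last _)⟩
  simp [hpaths, pathWeight]

theorem sum_pathWeight_succ {n a : ℕ} (r : ℕ) (ha : a ≤ n) :
    ∑ K ∈ monotonePaths n (r + 1) a, pathWeight n (r + 1) K =
      ∑ b ∈ Icc a n, a * (n + r + 1) ^ (b - a) * ∑ T ∈ monotonePaths n r b, pathWeight n r T := by
  simp_rw [mul_sum]
  rw [sum_sigma']
  refine sum_nbij' (fun K ↦ ⟨K 1, Fin.tail K⟩) (fun p ↦ Fin.cons ⟨a, Nat.lt_succ_of_le ha⟩ p.2)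
    ?_ ?_ ?_ ?_ ?_
  · intro K hK
    obtain ⟨h0, h01, htail⟩ := mem_monotonePaths_succ.1 hK
    simp only [mem_sigma, mem_Icc]
    exact ⟨⟨h0 ▸ h01, Fin.is_le _⟩, htail⟩
  · rintro ⟨b, T⟩ hT
    simp only [mem_sigma, mem_Icc] at hT
    obtain ⟨⟨hab, -⟩, hT⟩ := hT
    have hT0 : (T 0 : ℕ) = b := (mem_filter.1 hT).2.1
    rw [mem_monotonePaths_succ, Fin.cons_zero, Fin.cons_one, Fin.tail_cons, hT0, Fin.le_def, hT0]
    exact ⟨rfl, hab, hT⟩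
  · intro K hK
    obtain ⟨h0, -, -⟩ := mem_monotonePaths_succ.1 hK
    simp only [← h0]
    exact Fin.cons_self_tail K
  · rintro ⟨b, T⟩ hT
    have hT0 : (T 0 : ℕ) = b := (mem_filter.1 (mem_sigma.1 hT).2).2.1
    simp only [Fin.cons_one, Fin.tail_cons, hT0]
  · intro K hK
    obtain ⟨h0, -, -⟩ := mem_monotonePaths_succ.1 hK
    rw [pathWeight_succ, h0]

theorem sum_pathWeight {n a : ℕ} (r : ℕ) (ha : a ≤ n) :
    ∑ K ∈ monotonePaths n r a, pathWeight n r K = a * ((n - a + r).choose r * n ^ (n - a + r)) := by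
  induction r generalizing a with
  | zero => simpa using sum_pathWeight_zero ha
  | succ r ih =>
    rw [sum_pathWeight_succ r ha, sum_congr rfl fun b hb ↦ by rw [ih (mem_Icc.1 hb).2, mul_assoc],
      ← mul_sum, sum_Icc_pow_mul_choose r ha]
    rfl

open Classical in
theorem kloeve_multiple_sum_general (m n : ℕ) (hn : 0 < n) :
    ∑ K ∈ Finset.univ.filter (fun K : Fin (m + 2) → Fin (n + 1) =>
        (K 0 : ℕ) = 1 ∧ (K (Fin.last (m + 1)) : ℕ) = n ∧ Monotone K),
      ∏ i : Fin (m + 1),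
        (K i.castSucc : ℕ) * (n + m - (i : ℕ)) ^ ((K i.succ : ℕ) - (K i.castSucc : ℕ))
      = Nat.choose (n + m - 1) m * n ^ (n + m - 1) := by
  have h := sum_pathWeight (a := 1) m hn
  rwa [one_mul, show n - 1 + m = n + m - 1 by omega] at h

open Classical in
theorem kloeve_multiple_sum (m n : ℕ) (hm : 0 < m) (hn : 0 < n) :
    ∑ K ∈ Finset.univ.filter (fun K : Fin (m + 2) → Fin (n + 1) =>
        (K 0 : ℕ) = 1 ∧ (K (Fin.last (m + 1)) : ℕ) = n ∧ Monotone K),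
      ∏ i : Fin (m + 1),
        (K i.castSucc : ℕ) * (n + m - (i : ℕ)) ^ ((K i.succ : ℕ) - (K i.castSucc : ℕ))
      = Nat.choose (n + m - 1) m * n ^ (n + m - 1) :=
  kloeve_multiple_sum_general m n hn
end

section
/- For positive integers n and any integer k with 1 ≤ k ≤ n, the sum ∑_{j=k}^{n} j·(n+1)^{j-k}·n^{n-j} equals (n-k+1)·n^{n-k+1}. -/
open Finset

def kloeveSum (n k : ℕ) : ℕ :=
  ∑ j ∈ Icc k n, j * (n + 1) ^ (j - k) * n ^ (n - j)

lemma kloeveSum_self (n : ℕ) : kloeveSum n n = n := by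
  simp [kloeveSum]

lemma kloeveSum_eq_add_mul_kloeveSum_succ {n k : ℕ} (hkn : k ≤ n) :
    kloeveSum n k = k * n ^ (n - k) + (n + 1) * kloeveSum n (k + 1) := by
  rw [kloeveSum, Icc_eq_cons_Ioc hkn, sum_cons, Nat.sub_self, pow_zero, mul_one,
    ← Icc_add_one_left_eq_Ioc, kloeveSum, mul_sum]
  congr 1
  refine sum_congr rfl fun j hj => ?_
  have hsucc : j - k = j - (k + 1) + 1 := by
    have := (mem_Icc.mp hj).1
    omega
  rw [hsucc, pow_succ]
  ring

/-- The recurrence closes because `k + d = n`: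
`k n^d + (n + 1) d n^d = (k + d + n d) n^d = (d + 1) n^(d+1)`. -/
lemma kloeveSum_eq_of_add_eq {n k d : ℕ} (h : k + d = n) :
    kloeveSum n k = (d + 1) * n ^ (d + 1) := by
  induction d generalizing k with
  | zero =>
    obtain rfl : k = n := h
    simp [kloeveSum_self]
  | succ d ih =>
    rw [kloeveSum_eq_add_mul_kloeveSum_succ (by omega), ih (by omega),
      show n - k = d + 1 by omega]
    subst h
    ring

theorem kloeve_single_sum_general (n k : ℕ) (hkn : k ≤ n) :
    ∑ j ∈ Finset.Icc k n, j * (n + 1) ^ (j - k) * n ^ (n - j)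
      = (n - k + 1) * n ^ (n - k + 1) :=
  kloeveSum_eq_of_add_eq (Nat.add_sub_cancel' hkn)

theorem kloeve_single_sum (n k : ℕ) (hn : 0 < n) (hk1 : 1 ≤ k) (hkn : k ≤ n) :
    ∑ j ∈ Finset.Icc k n, j * (n + 1) ^ (j - k) * n ^ (n - j)
      = (n - k + 1) * n ^ (n - k + 1) :=
  kloeve_single_sum_general n k hkn
end

section
/- For any positive integer n, ∑_{1 ≤ k₁ ≤ k₂ ≤ k₃ ≤ n} k₁·k₂·k₃·(n+3)^{k₁-1}·(n+2)^{k₂-k₁}·(n+1)^{k₃-k₂}·n^{n-k₃} = C(n+2, 3)·n^{n+2}. -/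
/-! The three summations collapse one at a time, innermost first, by the identity
`∑_{k=j}^{n} k (n+d+1)^{k-j} C(n-k+d, d) n^{n-k+d} = C(n-j+d+1, d+1) n^{n-j+d+1}`
for `d = 0, 1, 2`. After the substitution `t = n - k` it becomes a polynomial identity in `x = n`,
proved by induction on `m = n - j`: the induction step is Pascal's rule combined with
`(d+1) C(m+d+1, d+1) = (m+1) C(m+d+1, d)`. -/

open Finset

theorem add_one_mul_choose_add_one (m d : ℕ) :
    (d + 1) * (m + d + 1).choose (d + 1) = (m + 1) * (m + d + 1).choose d := by
  have h := Nat.choose_succ_right_eq (m + d + 1) d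
  rw [show m + d + 1 - d = m + 1 by omega] at h
  linarith

theorem sum_range_sub_mul_pow_mul_choose {R : Type*} [CommRing R] (x : R) (d m : ℕ) :
    ∑ t ∈ range (m + 1), (x - t) * (x + (d + 1)) ^ (m - t) * (t + d).choose d * x ^ (t + d)
      = (m + d + 1).choose (d + 1) * x ^ (m + d + 1) := by
  induction m with
  | zero => simp [pow_succ']
  | succ m ih =>
    have hscale : ∑ t ∈ range (m + 1),
        (x - t) * (x + (d + 1)) ^ (m + 1 - t) * (t + d).choose d * x ^ (t + d)
          = (x + (d + 1)) * ((m + d + 1).choose (d + 1) * x ^ (m + d + 1)) := by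
      rw [← ih, mul_sum]
      refine sum_congr rfl fun t ht => ?_
      rw [Nat.sub_add_comm (mem_range_succ_iff.mp ht), pow_succ]
      ring
    have hkey : ((d : R) + 1) * (m + d + 1).choose (d + 1)
        = ((m : R) + 1) * (m + d + 1).choose d := by
      simpa using congrArg (Nat.cast : ℕ → R) (add_one_mul_choose_add_one m d)
    rw [sum_range_succ, hscale, Nat.sub_self, show m + 1 + d = m + d + 1 by omega,
      Nat.choose_succ_succ (m + d + 1) d]
    push_cast
    linear_combination x ^ (m + d + 1) * hkey

theorem sum_Icc_mul_pow_mul_choose (n d : ℕ) {j : ℕ} (hj : j ≤ n) :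
    ∑ k ∈ Icc j n, k * (n + d + 1) ^ (k - j) * (n - k + d).choose d * n ^ (n - k + d)
      = (n - j + d + 1).choose (d + 1) * n ^ (n - j + d + 1) := by
  apply Nat.cast_injective (R := ℤ)
  push_cast
  rw [← sum_range_sub_mul_pow_mul_choose (n : ℤ) d (n - j)]
  refine sum_nbij' (fun k => n - k) (fun t => n - t) ?_ ?_ ?_ ?_ ?_ <;>
    simp only [mem_Icc, mem_range]
  any_goals intros; omega
  intro k ⟨hjk, hkn⟩
  rw [Nat.cast_sub hkn, show n - j - (n - k) = k - j by omega]
  ring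

theorem kloeve_triple_sum (n : ℕ) (hn : 0 < n) :
    ∑ k1 ∈ Finset.Icc 1 n, ∑ k2 ∈ Finset.Icc k1 n, ∑ k3 ∈ Finset.Icc k2 n,
        k1 * k2 * k3 * (n + 3) ^ (k1 - 1) * (n + 2) ^ (k2 - k1) *
          (n + 1) ^ (k3 - k2) * n ^ (n - k3)
      = Nat.choose (n + 2) 3 * n ^ (n + 2) := by
  have hinner : ∀ k2 ≤ n, ∑ k3 ∈ Icc k2 n, k3 * (n + 1) ^ (k3 - k2) * n ^ (n - k3)
      = (n - k2 + 1) * n ^ (n - k2 + 1) := fun k2 hk2 => by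
    simpa using sum_Icc_mul_pow_mul_choose n 0 hk2
  have hmiddle : ∀ k1 ≤ n,
      ∑ k2 ∈ Icc k1 n, k2 * (n + 2) ^ (k2 - k1) * ((n - k2 + 1) * n ^ (n - k2 + 1))
      = (n - k1 + 2).choose 2 * n ^ (n - k1 + 2) := fun k1 hk1 => by
    simpa [mul_assoc] using sum_Icc_mul_pow_mul_choose n 1 hk1
  have houter :
      ∑ k1 ∈ Icc 1 n, k1 * (n + 3) ^ (k1 - 1) * ((n - k1 + 2).choose 2 * n ^ (n - k1 + 2))
      = (n + 2).choose 3 * n ^ (n + 2) := by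
    simpa [mul_assoc, show n - 1 + 3 = n + 2 by omega] using sum_Icc_mul_pow_mul_choose n 2 hn
  rw [← houter]
  refine sum_congr rfl fun k1 hk1 => ?_
  rw [← hmiddle k1 (mem_Icc.mp hk1).2, mul_sum]
  refine sum_congr rfl fun k2 hk2 => ?_
  rw [← hinner k2 (mem_Icc.mp hk2).2, mul_sum, mul_sum]
  exact sum_congr rfl fun k3 _ => by ring
end

section
/- Let d be a positive integer and x a real number. Let A_{d,x} be the d×2d matrix with entries a_{i,j} = x if 1 ≤ j ≤ d+1-i, a_{i,j} = 1 if d+2-i ≤ j ≤ d+i, and a_{i,j} = 0 if d+1+i ≤ j ≤ 2d. Define Ω_d(x) = ∑_{ρ} a_{1,ρ₁}a_{2,ρ₂}⋯a_{d,ρ_d}, where the sum is over all injective sequences (ρ₁,…,ρ_d) with 1 ≤ ρ_i ≤ d+i for each i. Then Ω_d(x) = ∑_{m=0}^{d} C(d,m)·(m+1)^d·(x-1)^{d-m}. -/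
/-!
Writing each entry `x` of `A_{d,x}` as `(x - 1) + 1` expands `Ω_d(x)` as `∑_T (x - 1)^|T| N(T)`,
where `N(T)` counts the injective `ρ` with `ρ_i` in the `x`-region for every row `i ∈ T`: these
are the injections below the row bounds `rowBound d T`. Filling the rows in increasing order of
their bounds, `N(T)` is the product over the rows of (bound − number of smaller bounds); with
`M = d + 1 - |T|` the factor of row `i` is `M + #{t ∈ T | t < i}` for `i ∉ T` and
`M - #{t ∉ T | t < i}` for `i ∈ T`. Summed over all `k`-subsets `T`, these products give
`C(d,k) M^d` identically in `M`, by induction on `d` using Pascal's rule and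
`(k + 1) C(d,k+1) = (d - k) C(d,k)`. Putting `m = d - k` gives the formula.
-/

open Classical in
/-- The permanent-type sum `Ω_d(x)` of the `d × 2d` matrix `A_{d,x}`
(rows and columns here are 0-indexed: row `i`, column `j` correspond to
row `i+1`, column `j+1` of the paper, so the entry is `x` if `i+j+1 ≤ d`,
`1` if `d ≤ i+j` and `j ≤ d+i`, and `0` otherwise). The sum is over
injective sequences `ρ` with `ρ i ≤ d + i` (0-indexed form of `1 ≤ ρ_i ≤ d+i`). -/
noncomputable def Omega (d : ℕ) (x : ℝ) : ℝ :=
  ∑ ρ ∈ Finset.univ.filter (fun ρ : Fin d → Fin (2 * d) =>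
      Function.Injective ρ ∧ ∀ i : Fin d, (ρ i : ℕ) ≤ d + (i : ℕ)),
    ∏ i : Fin d,
      (if (i : ℕ) + (ρ i : ℕ) < d then x
       else if (ρ i : ℕ) ≤ d + (i : ℕ) then 1 else 0)

open Finset

def boundedInjections {n : ℕ} (b : Fin n → ℕ) : Finset (Fin n → ℕ) :=
  {ρ ∈ Fintype.piFinset fun i => range (b i) | Function.Injective ρ}

@[simp]
lemma mem_boundedInjections {n : ℕ} {b : Fin n → ℕ} {ρ : Fin n → ℕ} :
    ρ ∈ boundedInjections b ↔ (∀ i, ρ i < b i) ∧ Function.Injective ρ := by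
  simp only [boundedInjections, mem_filter, Fintype.mem_piFinset, mem_range]

lemma card_boundedInjections_comp_perm {n : ℕ} (b : Fin n → ℕ) (σ : Equiv.Perm (Fin n)) :
    #(boundedInjections (b ∘ σ)) = #(boundedInjections b) := by
  refine card_nbij' (fun ρ => ρ ∘ σ.symm) (fun ρ => ρ ∘ σ) ?_ ?_ ?_ ?_
  · intro ρ hρ
    simp only [mem_coe, mem_boundedInjections] at hρ ⊢
    exact ⟨fun i => by simpa using hρ.1 (σ.symm i), hρ.2.comp σ.symm.injective⟩
  · intro ρ hρ
    simp only [mem_coe, mem_boundedInjections] at hρ ⊢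
    exact ⟨fun i => hρ.1 (σ i), hρ.2.comp σ.injective⟩
  · intro ρ _; ext; simp
  · intro ρ _; ext; simp

lemma card_boundedInjections_fiber_init {n : ℕ} {b : Fin (n + 1) → ℕ} (hb : Monotone b)
    {ρ : Fin n → ℕ} (hρ : ρ ∈ boundedInjections (Fin.init b)) :
    #{τ ∈ boundedInjections b | Fin.init τ = ρ} = b (Fin.last n) - n := by
  rw [mem_boundedInjections] at hρ
  have himage : univ.image ρ ⊆ range (b (Fin.last n)) := by
    intro v hv
    obtain ⟨i, -, rfl⟩ := mem_image.1 hv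
    exact mem_range.2 ((hρ.1 i).trans_le (hb (Fin.le_last _)))
  have hcard : #(range (b (Fin.last n)) \ univ.image ρ) = b (Fin.last n) - n := by
    rw [card_sdiff_of_subset himage, card_range, card_image_of_injective _ hρ.2, card_univ,
      Fintype.card_fin]
  rw [← hcard]
  refine card_nbij' (fun τ => τ (Fin.last n)) (fun v => Fin.snoc ρ v) ?_ ?_ ?_ ?_
  · intro τ hτ
    simp only [coe_filter, mem_boundedInjections, Set.mem_ofPred_eq] at hτ
    obtain ⟨⟨hτb, hτinj⟩, rfl⟩ := hτ
    simp only [coe_sdiff, coe_range, coe_image, coe_univ, Set.image_univ, Set.mem_sdiff,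
      Set.mem_Iio, Set.mem_range]
    refine ⟨hτb _, ?_⟩
    rintro ⟨i, hi⟩
    exact (Fin.castSucc_lt_last i).ne (hτinj hi)
  · intro v hv
    simp only [coe_sdiff, coe_range, coe_image, coe_univ, Set.image_univ, Set.mem_sdiff,
      Set.mem_Iio] at hv
    simp only [coe_filter, mem_boundedInjections, Set.mem_ofPred_eq, Fin.init_snoc, and_true,
      Fin.snoc_injective_iff]
    refine ⟨fun i => Fin.lastCases ?_ (fun i => ?_) i, hρ.2, hv.2⟩
    · simpa using hv.1
    · rw [Fin.snoc_castSucc]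
      exact hρ.1 i
  · intro τ hτ
    obtain ⟨-, rfl⟩ := mem_filter.1 hτ
    exact Fin.snoc_init_self τ
  · intro v _
    simp

lemma card_boundedInjections_of_monotone {n : ℕ} {b : Fin n → ℕ} (hb : Monotone b) :
    #(boundedInjections b) = ∏ i, (b i - i) := by
  induction n with
  | zero => simp [boundedInjections, Function.injective_of_subsingleton]
  | succ n ih =>
    have hinit : ∀ τ ∈ boundedInjections b, Fin.init τ ∈ boundedInjections (Fin.init b) := by
      intro τ hτ
      rw [mem_boundedInjections] at hτ ⊢
      exact ⟨fun i => hτ.1 _, hτ.2.comp (Fin.castSucc_injective n)⟩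
    rw [card_eq_sum_card_fiberwise hinit,
      sum_congr rfl fun ρ hρ => card_boundedInjections_fiber_init hb hρ, sum_const, smul_eq_mul,
      ih (b := Fin.init b) (hb.comp Fin.strictMono_castSucc.monotone), Fin.prod_univ_castSucc]
    simp [Fin.init]

lemma card_boundedInjections_of_injective {n : ℕ} {b : Fin n → ℕ} (hb : Function.Injective b) :
    #(boundedInjections b) = ∏ i, (b i - #{j | b j < b i}) := by
  set σ := Tuple.sort b
  have hσ : StrictMono (b ∘ σ) :=
    (Tuple.monotone_sort b).strictMono_of_injective (hb.comp σ.injective)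
  have hrank : ∀ k, #{j | b j < b (σ k)} = k := by
    intro k
    have : ({j | b j < b (σ k)} : Finset (Fin n)) = (Iio k).map σ.toEmbedding := by
      ext j
      rw [mem_filter, ← σ.apply_symm_apply j, mem_map_equiv, Equiv.symm_apply_apply]
      simp only [mem_univ, true_and, mem_Iio]
      exact hσ.lt_iff_lt
    rw [this, card_map, Fin.card_Iio]
  rw [← card_boundedInjections_comp_perm b σ, card_boundedInjections_of_monotone hσ.monotone,
    ← Equiv.prod_comp σ fun i => b i - #{j | b j < b i}]
  simp only [Function.comp_apply, hrank]

lemma card_fin_injective_lt {n N : ℕ} {b : Fin n → ℕ} (hb : ∀ i, b i ≤ N) :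
    #{ρ : Fin n → Fin N | Function.Injective ρ ∧ ∀ i, (ρ i : ℕ) < b i}
      = #(boundedInjections b) := by
  refine card_bij (fun ρ _ i => ρ i) ?_ ?_ ?_
  · intro ρ hρ
    rw [mem_filter] at hρ
    exact mem_boundedInjections.2 ⟨hρ.2.2, Fin.val_injective.comp hρ.2.1⟩
  · intro ρ _ τ _ h
    funext i
    exact Fin.ext (congrFun h i)
  · intro τ hτ
    rw [mem_boundedInjections] at hτ
    refine ⟨fun i => ⟨τ i, (hτ.1 i).trans_le (hb i)⟩, ?_, rfl⟩
    rw [mem_filter]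
    exact ⟨mem_univ _, fun i j h => hτ.2 (congrArg Fin.val h), hτ.1⟩

noncomputable def rankFactor (M : ℝ) (T : Finset ℕ) (j : ℕ) : ℝ :=
  if j ∈ T then M - #(Iio j \ T) else M + #(Iio j ∩ T)

lemma sum_powersetCard_succ_insert {α β : Type*} [DecidableEq α] [AddCommMonoid β] {a : α}
    {s : Finset α} (ha : a ∉ s) (k : ℕ) (f : Finset α → β) :
    ∑ t ∈ powersetCard (k + 1) (insert a s), f t
      = ∑ t ∈ powersetCard (k + 1) s, f t + ∑ t ∈ powersetCard k s, f (insert a t) := by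
  rw [powersetCard_succ_insert ha, sum_union, sum_image]
  · intro t ht u hu h
    have hat : a ∉ t := fun h' => ha (mem_powersetCard.1 ht |>.1 h')
    have hau : a ∉ u := fun h' => ha (mem_powersetCard.1 hu |>.1 h')
    rw [← erase_insert hat, ← erase_insert hau, h]
  · rw [disjoint_left]
    intro t ht ht'
    obtain ⟨u, -, rfl⟩ := mem_image.1 ht'
    exact ha ((mem_powersetCard.1 ht).1 (mem_insert_self a u))

lemma prod_range_succ_rankFactor {M : ℝ} {d : ℕ} {T : Finset ℕ} (hT : T ⊆ range d) :
    ∏ j ∈ range (d + 1), rankFactor M T j = (∏ j ∈ range d, rankFactor M T j) * (M + #T) := by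
  have hd : d ∉ T := fun h => notMem_range_self (hT h)
  rw [prod_range_succ, rankFactor, if_neg hd, Nat.Iio_eq_range, inter_eq_right.2 hT]

lemma prod_range_succ_rankFactor_insert {M : ℝ} {d : ℕ} {T : Finset ℕ} (hT : T ⊆ range d) :
    ∏ j ∈ range (d + 1), rankFactor M (insert d T) j
      = (∏ j ∈ range d, rankFactor M T j) * (M - (d - #T)) := by
  have hd : d ∉ T := fun h => notMem_range_self (hT h)
  rw [prod_range_succ]
  congr 1
  · refine prod_congr rfl fun j hj => ?_
    have hjd : j ≠ d := (mem_range.1 hj).ne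
    have hIio : d ∉ Iio j := by simp [(mem_range.1 hj).le]
    simp only [rankFactor, mem_insert, hjd, false_or, sdiff_insert_of_notMem hIio,
      inter_insert_of_notMem hIio]
  · rw [rankFactor, if_pos (mem_insert_self d T), sdiff_insert_of_notMem (by simp),
      Nat.Iio_eq_range, card_sdiff_of_subset hT, card_range,
      Nat.cast_sub ((card_le_card hT).trans_eq (card_range d))]

lemma cast_succ_mul_choose_succ (d k : ℕ) :
    ((k : ℝ) + 1) * d.choose (k + 1) = ((d : ℝ) - k) * d.choose k := by
  rcases le_or_gt k d with hkd | hdk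
  · have h := congrArg (Nat.cast (R := ℝ)) (Nat.choose_succ_right_eq d k)
    push_cast [Nat.cast_sub hkd] at h
    linarith
  · simp [Nat.choose_eq_zero_of_lt hdk, Nat.choose_eq_zero_of_lt (hdk.trans k.lt_succ_self)]

lemma sum_powersetCard_prod_rankFactor (M : ℝ) (d k : ℕ) :
    ∑ T ∈ powersetCard k (range d), ∏ j ∈ range d, rankFactor M T j = d.choose k * M ^ d := by
  induction d generalizing k with
  | zero => cases k <;> simp
  | succ d ih =>
    cases k with
    | zero => simp [rankFactor]
    | succ k =>
      have hstay : ∑ T ∈ powersetCard (k + 1) (range d), ∏ j ∈ range (d + 1), rankFactor M T j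
          = (M + (k + 1)) * (d.choose (k + 1) * M ^ d) := by
        rw [← ih, mul_sum]
        refine sum_congr rfl fun T hT => ?_
        obtain ⟨hsub, hcard⟩ := mem_powersetCard.1 hT
        rw [prod_range_succ_rankFactor hsub, hcard]
        push_cast
        ring
      have hinsert : ∑ T ∈ powersetCard k (range d),
            ∏ j ∈ range (d + 1), rankFactor M (insert d T) j
          = (M - (d - k)) * (d.choose k * M ^ d) := by
        rw [← ih, mul_sum]
        refine sum_congr rfl fun T hT => ?_
        obtain ⟨hsub, hcard⟩ := mem_powersetCard.1 hT
        rw [prod_range_succ_rankFactor_insert hsub, hcard]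
        ring
      rw [range_add_one, sum_powersetCard_succ_insert notMem_range_self, ← range_add_one, hstay,
        hinsert, Nat.choose_succ_succ, pow_succ]
      push_cast
      linear_combination M ^ d * cast_succ_mul_choose_succ d k

lemma sum_powersetCard_univ_prod_rankFactor (M : ℝ) (d k : ℕ) :
    ∑ T ∈ powersetCard k (univ : Finset (Fin d)),
      ∏ j ∈ range d, rankFactor M (T.map Fin.valEmbedding) j = d.choose k * M ^ d := by
  rw [← sum_powersetCard_prod_rankFactor M d k, ← Nat.Iio_eq_range, ← Fin.map_valEmbedding_univ,
    powersetCard_map, sum_map]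
  rfl

lemma rankFactor_map_valEmbedding (M : ℝ) {d : ℕ} (T : Finset (Fin d)) (i : Fin d) :
    rankFactor M (T.map Fin.valEmbedding) i
      = if i ∈ T then M - #(Iio i \ T) else M + #(Iio i ∩ T) := by
  have hmem : (i : ℕ) ∈ T.map Fin.valEmbedding ↔ i ∈ T := mem_map' Fin.valEmbedding
  rw [rankFactor, ← Fin.map_valEmbedding_Iio, ← Finset.map_sdiff, ← Finset.map_inter, card_map,
    card_map]
  simp only [hmem]

-- Exclusive bound for the 0-indexed column of row `i`: rows in `T` are confined to the
-- `x`-entries (`i + ρ i < d`), the other rows to the nonzero entries (`ρ i ≤ d + i`).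
def rowBound (d : ℕ) (T : Finset (Fin d)) (i : Fin d) : ℕ :=
  if i ∈ T then d - i else d + 1 + i

section rowBound

variable {d : ℕ} {T : Finset (Fin d)}

lemma lt_rowBound_iff {i : Fin d} {v : ℕ} :
    v < rowBound d T i ↔ v ≤ d + i ∧ (i ∈ T → i + v < d) := by
  unfold rowBound
  split_ifs with hi <;> simp only [hi, forall_const, IsEmpty.forall_iff, and_true] <;> omega

lemma rowBound_le (i : Fin d) : rowBound d T i ≤ 2 * d := by
  unfold rowBound
  split_ifs <;> omega

lemma rowBound_injective : Function.Injective (rowBound d T) := by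
  intro i j h
  unfold rowBound at h
  split_ifs at h <;> omega

lemma card_Iio_inter_add_card_Ioi_inter {α : Type*} [LinearOrder α] [LocallyFiniteOrderBot α]
    [LocallyFiniteOrderTop α] {T : Finset α} {i : α} (hi : i ∈ T) :
    #(Iio i ∩ T) + #(Ioi i ∩ T) + 1 = #T := by
  have hsplit : T = insert i ((Iio i ∩ T) ∪ (Ioi i ∩ T)) := by
    ext j
    simp only [mem_insert, mem_union, mem_inter, mem_Iio, mem_Ioi]
    grind
  rw [hsplit, card_insert_of_notMem (by simp), card_union_of_disjoint]
  · congr 3 <;> ext j <;> simp +contextual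
  · exact disjoint_left.2 fun j hj hj' =>
      (mem_Iio.1 (mem_inter.1 hj).1).asymm (mem_Ioi.1 (mem_inter.1 hj').1)

lemma card_rowBound_lt_of_mem {i : Fin d} (hi : i ∈ T) :
    #{j | rowBound d T j < rowBound d T i} = #(Ioi i ∩ T) := by
  congr 1
  ext j
  have := i.isLt
  have := j.isLt
  simp only [rowBound, hi, if_true, mem_filter, mem_univ, true_and, mem_inter, mem_Ioi,
    Fin.lt_def]
  split_ifs with hj <;> simp only [hj, and_true, and_false] <;> grind

lemma card_rowBound_lt_of_notMem {i : Fin d} (hi : i ∉ T) :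
    #{j | rowBound d T j < rowBound d T i} = #T + #(Iio i \ T) := by
  rw [← card_union_of_disjoint disjoint_sdiff]
  congr 1
  ext j
  have := i.isLt
  have := j.isLt
  simp only [rowBound, hi, if_false, mem_filter, mem_univ, true_and, mem_union, mem_sdiff, mem_Iio,
    Fin.lt_def]
  split_ifs with hj <;> simp only [hj, true_or, not_true, false_or, and_false] <;> grind

lemma cast_card_boundedInjections_rowBound :
    (#(boundedInjections (rowBound d T)) : ℝ)
      = ∏ j ∈ range d, rankFactor (d + 1 - #T) (T.map Fin.valEmbedding) j := by
  rw [card_boundedInjections_of_injective rowBound_injective, Nat.cast_prod,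
    ← Fin.prod_univ_eq_prod_range]
  refine prod_congr rfl fun i _ => ?_
  have hIio : #(Iio i ∩ T) + #(Iio i \ T) = i := by
    rw [card_inter_add_card_sdiff, Fin.card_Iio]
  have hIio' : (#(Iio i ∩ T) : ℝ) + #(Iio i \ T) = i := mod_cast hIio
  have hT : #T ≤ d := by simpa using card_le_univ T
  rw [rankFactor_map_valEmbedding]
  by_cases hi : i ∈ T
  · have hsplit := card_Iio_inter_add_card_Ioi_inter hi
    have hsplit' : (#(Iio i ∩ T) : ℝ) + #(Ioi i ∩ T) + 1 = #T := mod_cast hsplit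
    have hIoi : #(Ioi i ∩ T) ≤ d - 1 - i :=
      (card_le_card inter_subset_left).trans_eq (Fin.card_Ioi i)
    rw [card_rowBound_lt_of_mem hi, rowBound, if_pos hi, if_pos hi, Nat.cast_sub (by omega),
      Nat.cast_sub i.isLt.le]
    linarith
  · rw [card_rowBound_lt_of_notMem hi, rowBound, if_neg hi, if_neg hi, Nat.cast_sub (by omega)]
    push_cast
    linarith

end rowBound

lemma omega_eq_sum_card_boundedInjections (d : ℕ) (x : ℝ) :
    Omega d x = ∑ T ∈ (univ : Finset (Fin d)).powerset,
      (x - 1) ^ #T * #(boundedInjections (rowBound d T)) := by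
  unfold Omega
  have hexpand : ∀ ρ ∈ ({ρ : Fin d → Fin (2 * d) |
        Function.Injective ρ ∧ ∀ i : Fin d, (ρ i : ℕ) ≤ d + i} : Finset _),
      ∏ i : Fin d, (if (i : ℕ) + ρ i < d then x else if (ρ i : ℕ) ≤ d + i then 1 else 0)
        = ∑ T ∈ (univ : Finset (Fin d)).powerset,
            (x - 1) ^ #T * if ∀ i ∈ T, (i : ℕ) + ρ i < d then 1 else 0 := by
    intro ρ hρ
    have hle := (mem_filter.1 hρ).2.2
    calc ∏ i : Fin d, (if (i : ℕ) + ρ i < d then x else if (ρ i : ℕ) ≤ d + i then 1 else 0)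
        = ∏ i : Fin d, ((x - 1) * (if (i : ℕ) + ρ i < d then 1 else 0) + 1) := by
          refine prod_congr rfl fun i _ => ?_
          rw [if_pos (hle i)]
          split_ifs <;> ring
      _ = ∑ T ∈ (univ : Finset (Fin d)).powerset,
            ∏ i ∈ T, (x - 1) * (if (i : ℕ) + ρ i < d then 1 else 0) := prod_add_one _
      _ = _ := by
          simp_rw [prod_mul_distrib, prod_const, prod_boole]
          congr!
  rw [sum_congr rfl hexpand, sum_comm]
  refine sum_congr rfl fun T _ => ?_
  rw [← mul_sum, sum_boole, filter_filter, ← card_fin_injective_lt rowBound_le]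
  congr 3
  ext ρ
  simp only [mem_filter, mem_univ, true_and, lt_rowBound_iff, forall_and]
  tauto

theorem kloeve_conjecture_general (d : ℕ) (x : ℝ) :
    Omega d x = ∑ m ∈ Finset.range (d + 1),
      (Nat.choose d m : ℝ) * ((m : ℝ) + 1) ^ d * (x - 1) ^ (d - m) := by
  rw [omega_eq_sum_card_boundedInjections, sum_powerset, card_univ, Fintype.card_fin]
  conv_rhs => rw [← sum_range_reflect]
  refine sum_congr rfl fun k hk => ?_
  have hkd : k ≤ d := Nat.lt_succ_iff.1 (mem_range.1 hk)
  calc ∑ T ∈ powersetCard k univ, (x - 1) ^ #T * (#(boundedInjections (rowBound d T)) : ℝ)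
      = (x - 1) ^ k * ∑ T ∈ powersetCard k (univ : Finset (Fin d)),
          ∏ j ∈ range d, rankFactor (d + 1 - k) (T.map Fin.valEmbedding) j := by
        rw [mul_sum]
        refine sum_congr rfl fun T hT => ?_
        rw [cast_card_boundedInjections_rowBound, (mem_powersetCard.1 hT).2]
    _ = d.choose (d - k) * (((d - k : ℕ) : ℝ) + 1) ^ d * (x - 1) ^ (d - (d - k)) := by
        rw [sum_powersetCard_univ_prod_rankFactor, Nat.choose_symm hkd, Nat.sub_sub_self hkd,
          Nat.cast_sub hkd]
        ring
    _ = _ := by rw [Nat.add_sub_cancel]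

theorem kloeve_conjecture (d : ℕ) (hd : 0 < d) (x : ℝ) :
    Omega d x = ∑ m ∈ Finset.range (d + 1),
      (Nat.choose d m : ℝ) * ((m : ℝ) + 1) ^ d * (x - 1) ^ (d - m) :=
  kloeve_conjecture_general d x
end

section
/- Let d and m be integers with 1 ≤ m ≤ d. Then ∑_{1 ≤ i₁ < i₂ < ⋯ < iₘ ≤ d} i₁(i₂-1)(i₃-2)⋯(iₘ-m+1) · (d+1)^{i₁-1} d^{i₂-i₁-1} (d-1)^{i₃-i₂-1} ⋯ (d-m+1)^{d-iₘ} = C(d,m)·(d-m+1)^d. -/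
/-!
Let `S(n, k) = pathSum d N n k` be the sum of the theorem with `k` interior indices, right
endpoint `n + 1` in place of `d + 1`, and indices in `Fin N` (any `N > n + 1` gives the same
value). According to whether the last interior index equals `n + 1`,
`S(n+1, k+1) = (d - k) S(n, k+1) + (n + 1 - k) S(n, k)`. With the Euler operator `θ = X d/dX`,
the generating polynomial `F n = ∑ₖ S(n, k) Xᵏ` thus satisfies
`F (n+1) = (d + 1 + (n + 1) X) F n - (1 + X) θ (F n)`, which makes `G n = (1 + X)^(d - n) F n`
satisfy `G (n+1) = (d + 1 - θ) G n`. Starting from `G 0 = (1 + X)^d`, the coefficient of `Xᵏ`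
in `G n` is `C(d, k) (d + 1 - k)ⁿ`, and `G d = F d`.
-/

open Finset Polynomial

theorem Fin.strictMono_snoc_iff {α : Type*} [Preorder α] {n : ℕ} {f : Fin (n + 1) → α} {a : α} :
    StrictMono (Fin.snoc f a : Fin (n + 2) → α) ↔ StrictMono f ∧ f (Fin.last n) < a := by
  simp only [Fin.strictMono_iff_lt_succ, Fin.forall_fin_succ', Fin.snoc_castSucc, Fin.succ_last,
    Fin.snoc_last, ← Fin.castSucc_succ]

theorem Polynomial.coeff_X_mul_derivative {R : Type*} [Semiring R] (p : R[X]) (k : ℕ) :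
    (X * derivative p).coeff k = k * p.coeff k := by
  rcases k with _ | k
  · simp
  · rw [coeff_X_mul, coeff_derivative, Nat.cast_comm]
    push_cast
    rfl

namespace KloeveSum

def weight (d : ℕ) {k N : ℕ} (I : Fin (k + 2) → Fin N) : ℕ :=
  (∏ s : Fin k, ((I s.succ.castSucc : ℕ) - s)) *
    ∏ s : Fin (k + 1), (d + 1 - s) ^ ((I s.succ : ℕ) - I s.castSucc - 1)

theorem weight_snoc (d : ℕ) {k N : ℕ} (J : Fin (k + 2) → Fin N) (v : Fin N) :
    weight d (Fin.snoc J v : Fin (k + 3) → Fin N) =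
      weight d J * ((J (Fin.last _) : ℕ) - k) * (d - k) ^ ((v : ℕ) - J (Fin.last _) - 1) := by
  unfold weight
  rw [Fin.prod_univ_castSucc, Fin.prod_univ_castSucc (n := k + 1)]
  simp only [Fin.succ_castSucc, Fin.snoc_castSucc, Fin.val_castSucc, Fin.succ_last, Fin.val_last,
    Nat.reduceSubDiff, Fin.snoc_last]
  ring

open Classical in
noncomputable def pathSum (d N n k : ℕ) : ℕ :=
  ∑ I ∈ univ.filter (fun I : Fin (k + 2) → Fin N =>
      (I 0 : ℕ) = 0 ∧ (I (Fin.last (k + 1)) : ℕ) = n + 1 ∧ StrictMono I), weight d I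

open Classical in
theorem pathSum_succ_eq_sum_init (d : ℕ) {N n : ℕ} (k : ℕ) (hn : n + 1 < N) :
    pathSum d N n (k + 1) =
      ∑ J ∈ univ.filter (fun J : Fin (k + 2) → Fin N =>
          (J 0 : ℕ) = 0 ∧ StrictMono J ∧ (J (Fin.last _) : ℕ) ≤ n),
        weight d J * ((J (Fin.last _) : ℕ) - k) * (d - k) ^ (n - J (Fin.last _)) := by
  refine sum_nbij' Fin.init (fun J => Fin.snoc J ⟨n + 1, hn⟩) ?_ ?_ ?_ ?_ ?_
  · intro I hI
    cases I using Fin.snocCases with | snoc J v =>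
    simp only [mem_filter, mem_univ, true_and, Fin.init_snoc, Fin.snoc_apply_zero, Fin.snoc_last,
      Fin.strictMono_snoc_iff, Fin.lt_def] at hI ⊢
    obtain ⟨h0, hv, hJ, hlt⟩ := hI
    exact ⟨h0, hJ, by omega⟩
  · intro J hJ
    simp only [mem_filter, mem_univ, true_and] at hJ ⊢
    obtain ⟨h0, hJ, hle⟩ := hJ
    simp only [Fin.snoc_apply_zero, Fin.snoc_last, Fin.strictMono_snoc_iff, Fin.lt_def]
    exact ⟨h0, trivial, hJ, by omega⟩
  · intro I hI
    cases I using Fin.snocCases with | snoc J v =>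
    simp only [mem_filter, mem_univ, true_and, Fin.snoc_last] at hI
    simp [Fin.init_snoc, ← hI.2.1]
  · intro J _
    exact Fin.init_snoc _ _
  · intro I hI
    cases I using Fin.snocCases with | snoc J v =>
    simp only [mem_filter, mem_univ, true_and, Fin.snoc_last] at hI
    rw [weight_snoc, Fin.init_snoc, hI.2.1]
    congr 2
    omega

theorem pathSum_succ_succ (d : ℕ) {N n : ℕ} (k : ℕ) (hn : n + 2 < N) :
    pathSum d N (n + 1) (k + 1) =
      (d - k) * pathSum d N n (k + 1) + (n + 1 - k) * pathSum d N n k := by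
  classical
  rw [pathSum_succ_eq_sum_init d k hn, pathSum_succ_eq_sum_init d k (by omega), pathSum, mul_sum,
    mul_sum, ← sum_filter_add_sum_filter_not _ (fun J => (J (Fin.last _) : ℕ) ≤ n), filter_filter,
    filter_filter]
  congr 1
  · refine sum_congr (filter_congr fun J _ => ?_) fun J hJ => ?_
    · exact ⟨fun ⟨⟨h0, hJ, _⟩, hle⟩ => ⟨h0, hJ, hle⟩,
        fun ⟨h0, hJ, hle⟩ => ⟨⟨h0, hJ, by omega⟩, hle⟩⟩
    · obtain ⟨-, -, -, hle⟩ := mem_filter.1 hJ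
      rw [show n + 1 - J (Fin.last _) = n - J (Fin.last _) + 1 by omega, pow_succ]
      ring
  · refine sum_congr (filter_congr fun J _ => ?_) fun J hJ => ?_
    · constructor
      · rintro ⟨⟨h0, hJ, hle⟩, hlt⟩
        exact ⟨h0, by omega, hJ⟩
      · rintro ⟨h0, hlast, hJ⟩
        exact ⟨⟨h0, hJ, hlast.le⟩, by omega⟩
    · obtain ⟨-, -, hlast, -⟩ := mem_filter.1 hJ
      rw [hlast, Nat.sub_self, pow_zero, mul_one, mul_comm]

theorem pathSum_zero_right (d : ℕ) {N n : ℕ} (hn : n + 1 < N) : pathSum d N n 0 = (d + 1) ^ n := by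
  classical
  have hpaths : univ.filter (fun I : Fin 2 → Fin N =>
      (I 0 : ℕ) = 0 ∧ (I (Fin.last 1) : ℕ) = n + 1 ∧ StrictMono I) =
        {![⟨0, by omega⟩, ⟨n + 1, hn⟩]} := by
    ext I
    simp only [mem_filter, mem_univ, true_and, mem_singleton]
    constructor
    · rintro ⟨h0, h1, -⟩
      ext i
      fin_cases i
      · simpa using h0
      · simpa using h1
    · rintro rfl
      simp [Fin.lt_def]
  rw [pathSum, hpaths, sum_singleton]
  simp [weight]

theorem pathSum_zero_left (d : ℕ) {N : ℕ} (k : ℕ) (hN : 1 < N) : pathSum d N 0 (k + 1) = 0 := by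
  rw [pathSum_succ_eq_sum_init d k hN]
  refine sum_eq_zero fun J hJ => absurd hJ ?_
  simp only [mem_filter, mem_univ, true_and, not_and]
  intro h0 hJ
  have hlt := hJ (Fin.last_pos : (0 : Fin (k + 2)) < Fin.last _)
  rw [Fin.lt_def] at hlt
  omega

theorem pathSum_eq_zero_of_lt (d : ℕ) {N n k : ℕ} (hn : n + 1 < N) (hk : n < k) :
    pathSum d N n k = 0 := by
  induction n generalizing k with
  | zero =>
    obtain ⟨k, rfl⟩ : ∃ j, k = j + 1 := ⟨k - 1, by omega⟩
    exact pathSum_zero_left d k hn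
  | succ n ih =>
    obtain ⟨k, rfl⟩ : ∃ j, k = j + 1 := ⟨k - 1, by omega⟩
    rw [pathSum_succ_succ d k hn, ih (by omega) (by omega), ih (by omega) (by omega), mul_zero,
      mul_zero, add_zero]

noncomputable def pathPoly (d n : ℕ) : ℤ[X] :=
  ∑ k ∈ range (n + 1), C (pathSum d (d + 2) n k : ℤ) * X ^ k

theorem coeff_pathPoly {d n : ℕ} (hn : n ≤ d) (k : ℕ) :
    (pathPoly d n).coeff k = pathSum d (d + 2) n k := by
  simp only [pathPoly, finsetSum_coeff, coeff_C_mul_X_pow, sum_ite_eq, mem_range]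
  split_ifs with hk
  · rfl
  · rw [pathSum_eq_zero_of_lt d (by omega) (by omega), Nat.cast_zero]

theorem pathPoly_succ {d n : ℕ} (hn : n < d) :
    pathPoly d (n + 1) = (C ((d : ℤ) + 1) + C ((n : ℤ) + 1) * X) * pathPoly d n
      - (1 + X) * (X * derivative (pathPoly d n)) := by
  ext k
  simp only [coeff_sub, add_mul, one_mul, coeff_add, coeff_C_mul, mul_assoc, coeff_X_mul_derivative]
  rcases k with _ | k
  · simp only [coeff_pathPoly hn.le, coeff_pathPoly hn, mul_coeff_zero, coeff_X_zero,
      pathSum_zero_right d (by omega : n + 1 < d + 2),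
      pathSum_zero_right d (by omega : n + 1 + 1 < d + 2)]
    push_cast
    ring
  · simp only [coeff_X_mul, coeff_X_mul_derivative, coeff_pathPoly hn.le, coeff_pathPoly hn,
      pathSum_succ_succ d k (by omega : n + 2 < d + 2)]
    -- the truncated subtractions `d - k`, `n + 1 - k` are exact unless both sums vanish
    rcases le_or_gt k n with hk | hk
    · push_cast [Nat.cast_sub (by omega : k ≤ d), Nat.cast_sub (by omega : k ≤ n + 1)]
      ring
    · rw [pathSum_eq_zero_of_lt d (by omega) hk, pathSum_eq_zero_of_lt d (by omega) (by omega)]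
      simp

theorem one_add_X_pow_mul_pathPoly_succ {d n : ℕ} (hn : n < d) :
    (1 + X) ^ (d - (n + 1)) * pathPoly d (n + 1) =
      C ((d : ℤ) + 1) * ((1 + X) ^ (d - n) * pathPoly d n)
        - X * derivative ((1 + X) ^ (d - n) * pathPoly d n) := by
  obtain ⟨e, rfl⟩ : ∃ e, d = n + 1 + e := ⟨d - (n + 1), by omega⟩
  rw [show n + 1 + e - (n + 1) = e by omega, show n + 1 + e - n = e + 1 by omega, pathPoly_succ hn,
    derivative_mul, derivative_pow, derivative_add, derivative_one, derivative_X]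
  simp only [map_add, map_natCast, map_one, Nat.cast_add, Nat.cast_one, zero_add, mul_one,
    add_tsub_cancel_right]
  ring

theorem coeff_one_add_X_pow_mul_pathPoly {d n : ℕ} (hn : n ≤ d) (k : ℕ) :
    ((1 + X) ^ (d - n) * pathPoly d n).coeff k = d.choose k * ((d : ℤ) + 1 - k) ^ n := by
  induction n with
  | zero =>
    simp [pathPoly, pathSum_zero_right d (by omega : 0 + 1 < d + 2), coeff_one_add_X_pow]
  | succ n ih =>
    rw [one_add_X_pow_mul_pathPoly_succ hn, coeff_sub, coeff_C_mul, coeff_X_mul_derivative,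
      ih (by omega)]
    ring

end KloeveSum

open Classical in
theorem kloeve_strict_sum_general (d m : ℕ) :
    ∑ I ∈ Finset.univ.filter (fun I : Fin (m + 2) → Fin (d + 2) =>
        (I 0 : ℕ) = 0 ∧ (I (Fin.last (m + 1)) : ℕ) = d + 1 ∧ StrictMono I),
      ((∏ s : Fin m, ((I s.succ.castSucc : ℕ) - (s : ℕ))) *
        ∏ s : Fin (m + 1),
          (d + 1 - (s : ℕ)) ^ ((I s.succ : ℕ) - (I s.castSucc : ℕ) - 1))
      = Nat.choose d m * (d - m + 1) ^ d := by
  change KloeveSum.pathSum d (d + 2) d m = _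
  rcases le_or_gt m d with hm | hm
  · have key := KloeveSum.coeff_one_add_X_pow_mul_pathPoly (le_refl d) m
    rw [Nat.sub_self, pow_zero, one_mul, KloeveSum.coeff_pathPoly le_rfl,
      show (d : ℤ) + 1 - m = ((d - m + 1 : ℕ) : ℤ) by push_cast [Nat.cast_sub hm]; ring] at key
    exact_mod_cast key
  · rw [Nat.choose_eq_zero_of_lt hm, zero_mul]
    exact KloeveSum.pathSum_eq_zero_of_lt d (by omega) hm

open Classical in
theorem kloeve_strict_sum (d m : ℕ) (hm : 1 ≤ m) (hmd : m ≤ d) :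
    ∑ I ∈ Finset.univ.filter (fun I : Fin (m + 2) → Fin (d + 2) =>
        (I 0 : ℕ) = 0 ∧ (I (Fin.last (m + 1)) : ℕ) = d + 1 ∧ StrictMono I),
      ((∏ s : Fin m, ((I s.succ.castSucc : ℕ) - (s : ℕ))) *
        ∏ s : Fin (m + 1),
          (d + 1 - (s : ℕ)) ^ ((I s.succ : ℕ) - (I s.castSucc : ℕ) - 1))
      = Nat.choose d m * (d - m + 1) ^ d :=
  kloeve_strict_sum_general d m
end

section
/- For any positive integer d, the function Ω_d(x) (the permanent of the d×2d matrix A_{d,x}) is a polynomial in x of degree d with leading coefficient 1, i.e., the coefficient of x^d in Ω_d(x) is 1. -/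
open Classical in
/-- `Ω_d` as a polynomial in `x`: the permanent-type sum of the `d × 2d`
matrix `A_{d,X}` over injective sequences `ρ` with `ρ i ≤ d + i`
(0-indexed rows and columns). -/
noncomputable def OmegaPoly (d : ℕ) : Polynomial ℝ :=
  ∑ ρ ∈ Finset.univ.filter (fun ρ : Fin d → Fin (2 * d) =>
      Function.Injective ρ ∧ ∀ i : Fin d, (ρ i : ℕ) ≤ d + (i : ℕ)),
    ∏ i : Fin d,
      (if (i : ℕ) + (ρ i : ℕ) < d then Polynomial.X
       else if (ρ i : ℕ) ≤ d + (i : ℕ) then 1 else 0)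

/-!
Each admissible `ρ` contributes the monomial `X ^ k`, where `k` counts the rows `i` in which
`ρ` picks an `x`-entry, i.e. `i + ρ i < d`; hence the degree is at most `d`. A term of degree `d`
is an injection into `{0, …, d - 1}` with `ρ i ≤ d - 1 - i` for every `i`. Both sides of this
inequality sum to `0 + ⋯ + (d - 1)`, so it is an equality and `ρ` is the antidiagonal
`i ↦ d - 1 - i`: exactly one term reaches degree `d`.
-/

open Finset Polynomial

theorem Polynomial.coeff_sum_X_pow {R ι : Type*} [Semiring R] (s : Finset ι) (k : ι → ℕ)
    (n : ℕ) : (∑ i ∈ s, (X : R[X]) ^ k i).coeff n = #{i ∈ s | k i = n} := by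
  simp only [finsetSum_coeff, coeff_X_pow, eq_comm (a := n), sum_boole]

theorem Fin.val_eq_rev_of_injective_of_add_lt {n : ℕ} (f : Fin n → ℕ)
    (hf : Function.Injective f) (hlt : ∀ i : Fin n, i + f i < n) (i : Fin n) :
    f i = i.rev := by
  let g : Fin n → Fin n := fun i => ⟨f i, by have := hlt i; omega⟩
  have hg : Function.Bijective g :=
    Finite.injective_iff_bijective.mp fun a b hab => hf (congrArg Fin.val hab)
  have hsum : ∑ j, f j = ∑ j : Fin n, (j.rev : ℕ) := calc
    ∑ j, f j = ∑ j, (g j : ℕ) := rfl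
    _ = ∑ j : Fin n, (j : ℕ) := Equiv.sum_comp (Equiv.ofBijective g hg) _
    _ = ∑ j : Fin n, (j.rev : ℕ) := (Equiv.sum_comp Fin.revPerm _).symm
  have hle : ∀ j ∈ univ, f j ≤ (j.rev : ℕ) := fun j _ => by
    have := hlt j; rw [Fin.val_rev]; omega
  exact (sum_eq_sum_iff_of_le hle).mp hsum i (mem_univ i)

namespace OmegaPoly

variable {d : ℕ}

open Classical in
noncomputable def admissible (d : ℕ) : Finset (Fin d → Fin (2 * d)) :=
  univ.filter fun ρ => Function.Injective ρ ∧ ∀ i : Fin d, (ρ i : ℕ) ≤ d + (i : ℕ)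

def xRows (ρ : Fin d → Fin (2 * d)) : Finset (Fin d) :=
  univ.filter fun i => (i : ℕ) + (ρ i : ℕ) < d

def antidiagonal (d : ℕ) : Fin d → Fin (2 * d) :=
  fun i => Fin.castLE (by omega) i.rev

theorem eq_sum_X_pow (d : ℕ) :
    OmegaPoly d = ∑ ρ ∈ admissible d, (X : ℝ[X]) ^ #(xRows ρ) := by
  refine sum_congr rfl fun ρ hρ => ?_
  have hle := (mem_filter.mp hρ).2.2
  rw [xRows, card_eq_sum_ones, sum_filter, ← prod_pow_eq_pow_sum]
  exact prod_congr rfl fun i _ => by split_ifs <;> simp_all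

theorem card_xRows_le (ρ : Fin d → Fin (2 * d)) : #(xRows ρ) ≤ d :=
  (card_filter_le _ _).trans_eq (card_fin d)

theorem card_xRows_eq_iff (ρ : Fin d → Fin (2 * d)) :
    #(xRows ρ) = d ↔ ∀ i : Fin d, (i : ℕ) + (ρ i : ℕ) < d := by
  simpa [xRows] using card_filter_eq_iff (s := univ) (p := fun i : Fin d => (i : ℕ) + ρ i < d)

theorem antidiagonal_mem_admissible : antidiagonal d ∈ admissible d := by
  refine mem_filter.mpr ⟨mem_univ _, fun a b hab => ?_, fun i => ?_⟩
  · exact Fin.rev_injective (Fin.castLE_injective _ hab)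
  · simp only [antidiagonal, Fin.val_castLE, Fin.val_rev]; omega

theorem card_xRows_antidiagonal : #(xRows (antidiagonal d)) = d :=
  (card_xRows_eq_iff _).mpr fun i => by
    simp only [antidiagonal, Fin.val_castLE, Fin.val_rev]; omega

theorem filter_card_xRows_eq :
    {ρ ∈ admissible d | #(xRows ρ) = d} = {antidiagonal d} := by
  refine eq_singleton_iff_unique_mem.mpr
    ⟨mem_filter.mpr ⟨antidiagonal_mem_admissible, card_xRows_antidiagonal⟩, fun ρ hρ => ?_⟩
  obtain ⟨hadm, hcard⟩ := mem_filter.mp hρ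
  have hinj : Function.Injective fun i => (ρ i : ℕ) :=
    Fin.val_injective.comp (mem_filter.mp hadm).2.1
  funext i
  exact Fin.ext (Fin.val_eq_rev_of_injective_of_add_lt _ hinj ((card_xRows_eq_iff ρ).mp hcard) i)

end OmegaPoly

theorem OmegaPoly_monic_general (d : ℕ) :
    (OmegaPoly d).natDegree = d ∧ (OmegaPoly d).coeff d = 1 := by
  have hcoeff : (OmegaPoly d).coeff d = 1 := by
    rw [OmegaPoly.eq_sum_X_pow, coeff_sum_X_pow, OmegaPoly.filter_card_xRows_eq,
      card_singleton, Nat.cast_one]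
  have hdeg_le : (OmegaPoly d).natDegree ≤ d := by
    rw [OmegaPoly.eq_sum_X_pow]
    exact natDegree_sum_le_of_forall_le _ _ fun ρ _ =>
      (natDegree_X_pow_le _).trans (OmegaPoly.card_xRows_le ρ)
  exact ⟨hdeg_le.antisymm (le_natDegree_of_ne_zero (by simp [hcoeff])), hcoeff⟩

theorem OmegaPoly_monic (d : ℕ) (hd : 0 < d) :
    (OmegaPoly d).natDegree = d ∧ (OmegaPoly d).coeff d = 1 :=
  OmegaPoly_monic_general d
end
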